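/- For every bounded function f : ℤ → ℝ, every x ∈ ℤ and every real s with |s| < 1, ∑_{k≥0} s^k E[f(x + S(k))] = E[∑_{k=0}^{σ_x − 1} s^k f(x + S(k))] + E[s^{σ_x} 1_{σ_x < ∞}] · ∑_{k≥0} s^k E[f(S(k))], where in the first expectation on the right-hand side the sum runs over all k ∈ ℕ₀ on the event {σ_x = ∞}. -/

import Mathlib

/-!
Split `f (x + S k)` according to whether `σ_x > k` or `σ_x = j` for some `j ≤ k`. The event
`{σ_x = j}` depends only on `τ 0, …, τ (j-1)`, and on it `x + S k = τ j + ⋯ + τ (k-1)`; independence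
and stationarity of the increments then give `E[f (x + S k); σ_x = j] = P(σ_x = j) E[f (S (k-j))]`.
Multiplying by `s ^ k` and summing over `k` turns this convolution in `j` into the product of the
two generating functions.
-/

open MeasureTheory ProbabilityTheory

/-- The first hitting time of `0` by the walk `x + S k`, valued in `ℕ∞`
(`⊤` if the walk never hits `0`). -/
noncomputable def hitTime {Ω : Type*} (S : ℕ → Ω → ℤ) (x : ℤ) (ω : Ω) : ℕ∞ :=
  ⨅ (k : ℕ) (_ : x + S k ω = 0), (k : ℕ∞)

open Finset

section HitTime

variable {Ω : Type*} {S : ℕ → Ω → ℤ} {x : ℤ} {ω : Ω}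

lemma coe_le_hitTime_iff {k : ℕ} :
    (k : ℕ∞) ≤ hitTime S x ω ↔ ∀ i < k, x + S i ω ≠ 0 := by
  simp only [hitTime, le_iInf_iff, Nat.cast_le]
  exact ⟨fun h i hi h0 => (h i h0).not_gt hi, fun h i h0 => not_lt.1 fun hi => h i hi h0⟩

lemma lt_hitTime_iff {k : ℕ} :
    (k : ℕ∞) < hitTime S x ω ↔ ∀ i ≤ k, x + S i ω ≠ 0 := by
  rw [← ENat.add_one_le_iff (ENat.natCast_ne_top k), ← Nat.cast_succ, coe_le_hitTime_iff]
  simp only [Nat.lt_succ_iff]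

lemma hitTime_eq_coe_iff {j : ℕ} :
    hitTime S x ω = j ↔ x + S j ω = 0 ∧ ∀ i < j, x + S i ω ≠ 0 := by
  rw [le_antisymm_iff, ← not_lt, lt_hitTime_iff, coe_le_hitTime_iff]
  push Not
  constructor
  · rintro ⟨⟨i, hij, hi⟩, h⟩
    obtain rfl : i = j := hij.eq_or_lt.resolve_right fun hlt => h i hlt hi
    exact ⟨hi, h⟩
  · rintro ⟨hj, h⟩
    exact ⟨⟨j, le_rfl, hj⟩, h⟩

lemma hitTime_eq_coe_iff_of_eqOn {S' : ℕ → Ω → ℤ} {ω' : Ω} {j : ℕ}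
    (h : ∀ i ≤ j, S i ω = S' i ω') : hitTime S x ω = j ↔ hitTime S' x ω' = j := by
  simp only [hitTime_eq_coe_iff, h j le_rfl]
  exact and_congr_right fun _ => forall₂_congr fun i hi => by rw [h i hi.le]

lemma hitTime_eq_top_iff : hitTime S x ω = ⊤ ↔ ∀ k, x + S k ω ≠ 0 := by
  simp [hitTime, iInf_eq_top]

lemma measurable_hitTime [MeasurableSpace Ω] (hS : ∀ k, Measurable (S k)) :
    Measurable (hitTime S x) := by
  have hzero : ∀ k, MeasurableSet {ω | x + S k ω = 0} := fun k =>
    measurableSet_eq_fun ((hS k).const_add x) measurable_const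
  refine measurable_to_countable' fun n => ?_
  induction n using ENat.recTopCoe with
  | top =>
    simp only [Set.preimage, Set.mem_singleton_iff, hitTime_eq_top_iff, Set.ofPred_forall]
    exact .iInter fun k => (hzero k).compl
  | coe j =>
    simp only [Set.preimage, Set.mem_singleton_iff, hitTime_eq_coe_iff, Set.ofPred_and,
      Set.ofPred_forall]
    exact (hzero j).inter (.iInter fun i => .iInter fun _ => (hzero i).compl)

end HitTime

lemma ENat.ite_lt_add_sum_ite_eq {M : Type*} [AddCommMonoid M] (n : ℕ∞) (k : ℕ) (c : M) :
    ((if (k : ℕ∞) < n then c else 0) + ∑ j ∈ range (k + 1), if n = j then c else 0) = c := by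
  induction n using ENat.recTopCoe with
  | top => simp
  | coe n =>
    by_cases h : k < n
    · simp [h, not_le.2 h]
    · simp [h, not_lt.1 h]

lemma ENat.ite_eq_top_eq_tsum {M : Type*} [AddCommMonoid M] [TopologicalSpace M] (n : ℕ∞)
    (a : ℕ → M) : (if n = ⊤ then 0 else a n.toNat) = ∑' j : ℕ, if n = j then a j else 0 := by
  induction n using ENat.recTopCoe with
  | top => simp
  | coe n => simp

section PowerSeries

variable {s : ℝ} {a b : ℕ → ℝ} {A B : ℝ}

lemma summable_norm_pow_mul_of_abs_le (hs : |s| < 1) (ha : ∀ k, |a k| ≤ A) :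
    Summable fun k => ‖s ^ k * a k‖ :=
  ((summable_geometric_of_lt_one (abs_nonneg s) hs).mul_right A).of_nonneg_of_le
    (fun _ => norm_nonneg _) fun k => by
      rw [norm_mul, norm_pow, Real.norm_eq_abs, Real.norm_eq_abs]
      exact mul_le_mul_of_nonneg_left (ha k) (by positivity)

lemma hasSum_pow_mul_sum_range_mul (hs : |s| < 1) (ha : ∀ k, |a k| ≤ A) (hb : ∀ k, |b k| ≤ B) :
    HasSum (fun k => s ^ k * ∑ j ∈ range (k + 1), a j * b (k - j))
      ((∑' k, s ^ k * a k) * ∑' k, s ^ k * b k) := by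
  have ha' := summable_norm_pow_mul_of_abs_le hs ha
  have hb' := summable_norm_pow_mul_of_abs_le hs hb
  have hsplit : ∀ k, s ^ k * ∑ j ∈ range (k + 1), a j * b (k - j) =
      ∑ j ∈ range (k + 1), s ^ j * a j * (s ^ (k - j) * b (k - j)) := fun k => by
    rw [mul_sum]
    refine sum_congr rfl fun j hj => ?_
    rw [← pow_mul_pow_sub s (mem_range_succ_iff.1 hj)]
    ring
  simp_rw [hsplit, tsum_mul_tsum_eq_tsum_sum_range_of_summable_norm ha' hb']
  exact (summable_norm_sum_mul_range_of_summable_norm ha' hb').of_norm.hasSum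

lemma tsum_pow_mul_add_sum_range_mul {c : ℕ → ℝ} {C : ℝ} (hs : |s| < 1) (hc : ∀ k, |c k| ≤ C)
    (ha : ∀ k, |a k| ≤ A) (hb : ∀ k, |b k| ≤ B) :
    ∑' k, s ^ k * (c k + ∑ j ∈ range (k + 1), a j * b (k - j)) =
      ∑' k, s ^ k * c k + (∑' k, s ^ k * a k) * ∑' k, s ^ k * b k := by
  simp_rw [mul_add]
  exact ((summable_norm_pow_mul_of_abs_le hs hc).of_norm.hasSum.add
    (hasSum_pow_mul_sum_range_mul hs ha hb)).tsum_eq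

end PowerSeries

lemma integral_tsum_of_norm_le {α E ι : Type*} [MeasurableSpace α] {μ : Measure α}
    [IsFiniteMeasure μ] [NormedAddCommGroup E] [NormedSpace ℝ E] [Countable ι]
    {F : ι → α → E} {C : ι → ℝ} (hF : ∀ i, AEStronglyMeasurable (F i) μ)
    (hle : ∀ i a, ‖F i a‖ ≤ C i) (hC : Summable C) :
    ∫ a, ∑' i, F i a ∂μ = ∑' i, ∫ a, F i a ∂μ := by
  refine (integral_tsum_of_summable_integral_norm
    (fun i => .of_bound (hF i) (C i) (ae_of_all _ (hle i))) ?_).symm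
  refine (hC.mul_left (μ.real Set.univ)).of_nonneg_of_le
    (fun i => integral_nonneg fun _ => norm_nonneg _) fun i => ?_
  calc ∫ a, ‖F i a‖ ∂μ ≤ ∫ _, C i ∂μ :=
        integral_mono_of_nonneg (ae_of_all _ fun _ => norm_nonneg _) (integrable_const _)
          (ae_of_all _ (hle i))
    _ = μ.real Set.univ * C i := by rw [integral_const, smul_eq_mul]

section GeneratingFunction

variable {Ω : Type*} [MeasurableSpace Ω] {P : Measure Ω} [IsProbabilityMeasure P]
  {T : Ω → ℕ∞} {s : ℝ}

lemma abs_integral_le_of_abs_le {F : Ω → ℝ} {M : ℝ} (h : ∀ ω, |F ω| ≤ M) :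
    |∫ ω, F ω ∂P| ≤ M := by
  simpa using norm_integral_le_of_norm_le_const (μ := P)
    (ae_of_all _ fun ω => (Real.norm_eq_abs _).trans_le (h ω))

lemma integral_tsum_ite_lt (hT : Measurable T) (hs : |s| < 1) {F : ℕ → Ω → ℝ}
    (hF : ∀ k, Measurable (F k)) {M : ℝ} (hM : ∀ k ω, |F k ω| ≤ M) :
    ∫ ω, (∑' k : ℕ, if (k : ℕ∞) < T ω then s ^ k * F k ω else 0) ∂P =
      ∑' k : ℕ, s ^ k * ∫ ω, (if (k : ℕ∞) < T ω then F k ω else 0) ∂P := by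
  rw [integral_tsum_of_norm_le (C := fun k => |s| ^ k * M)
    (F := fun (k : ℕ) ω => if (k : ℕ∞) < T ω then s ^ k * F k ω else 0)
    (fun k => ((measurable_const.mul (hF k)).ite
      (hT (.of_discrete (s := {n | (k : ℕ∞) < n}))) measurable_const).aestronglyMeasurable)
    (fun k ω => by
      split_ifs
      · simpa [abs_mul] using mul_le_mul_of_nonneg_left (hM k ω) (by positivity)
      · simpa using mul_nonneg (by positivity) ((abs_nonneg _).trans (hM k ω)))
    ((summable_geometric_of_lt_one (abs_nonneg s) hs).mul_right M)]
  simp_rw [← integral_const_mul, mul_ite, mul_zero]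

lemma integral_ite_eq_top_pow (hT : Measurable T) (hs : |s| < 1) :
    ∫ ω, (if T ω = ⊤ then (0 : ℝ) else s ^ (T ω).toNat) ∂P =
      ∑' j : ℕ, s ^ j * P.real {ω | T ω = j} := by
  simp_rw [ENat.ite_eq_top_eq_tsum]
  rw [integral_tsum_of_norm_le (C := fun j => |s| ^ j)
    (F := fun (j : ℕ) ω => if T ω = j then s ^ j else 0)
    (fun j => (measurable_const.ite (hT (.of_discrete (s := {(j : ℕ∞)})))
      measurable_const).aestronglyMeasurable)
    (fun j ω => by split_ifs <;> simp) (summable_geometric_of_lt_one (abs_nonneg s) hs)]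
  refine tsum_congr fun j => ?_
  rw [mul_comm, ← smul_eq_mul]
  refine (integral_congr_ae (ae_of_all _ fun ω => ?_)).trans
    (integral_indicator_const (s ^ j) (hT (.of_discrete (s := {(j : ℕ∞)}))))
  simp [Set.indicator]

end GeneratingFunction

lemma ProbabilityTheory.IndepFun.of_factorsThrough {Ω α β γ δ : Type*} [MeasurableSpace Ω]
    {μ : Measure Ω} [MeasurableSpace α] [Countable α] [MeasurableSingletonClass α]
    [MeasurableSpace β] [Countable β] [MeasurableSingletonClass β]
    [MeasurableSpace γ] [Nonempty γ] [MeasurableSpace δ] [Nonempty δ]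
    {V : Ω → α} {W : Ω → β} {X : Ω → γ} {Y : Ω → δ}
    (h : IndepFun V W μ) (hX : X.FactorsThrough V) (hY : Y.FactorsThrough W) :
    IndepFun X Y μ := by
  have hXV : X = Function.extend V X (fun _ => Classical.arbitrary γ) ∘ V :=
    funext fun ω => (hX.extend_apply _ ω).symm
  have hYW : Y = Function.extend W Y (fun _ => Classical.arbitrary δ) ∘ W :=
    funext fun ω => (hY.extend_apply _ ω).symm
  rw [hXV, hYW]
  exact h.comp (measurable_of_countable _) (measurable_of_countable _)

section IID

variable {Ω β : Type*} [MeasurableSpace Ω] {P : Measure Ω} [IsProbabilityMeasure P]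
  [MeasurableSpace β] {τ : ℕ → Ω → β}

lemma ProbabilityTheory.iIndepFun.identDistrib_shift (hmeas : ∀ n, Measurable (τ n))
    (hindep : iIndepFun τ P) (hident : ∀ n, IdentDistrib (τ n) (τ 0) P P) (j m : ℕ) :
    IdentDistrib (fun ω (i : Fin m) => τ (j + i) ω) (fun ω (i : Fin m) => τ i ω) P P where
  aemeasurable_fst := (measurable_pi_lambda _ fun _ => hmeas _).aemeasurable
  aemeasurable_snd := (measurable_pi_lambda _ fun _ => hmeas _).aemeasurable
  map_eq := by
    have hlaw : ∀ g : Fin m → ℕ, g.Injective →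
        P.map (fun ω i => τ (g i) ω) = Measure.pi fun _ => P.map (τ 0) := fun g hg => by
      rw [(iIndepFun_iff_map_fun_eq_pi_map fun i => (hmeas (g i)).aemeasurable).1
        (hindep.precomp hg)]
      simp_rw [(hident _).map_eq]
    exact (hlaw _ fun a b h => Fin.ext (Nat.add_left_cancel h)).trans
      (hlaw _ Fin.val_injective).symm

lemma ProbabilityTheory.iIndepFun.identDistrib_sum_Ico [AddCommMonoid β] [MeasurableAdd₂ β]
    (hmeas : ∀ n, Measurable (τ n)) (hindep : iIndepFun τ P)
    (hident : ∀ n, IdentDistrib (τ n) (τ 0) P P) (j m : ℕ) :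
    IdentDistrib (fun ω => ∑ i ∈ Ico j (j + m), τ i ω) (fun ω => ∑ i ∈ range m, τ i ω) P P := by
  have := (hindep.identDistrib_shift hmeas hident j m).comp
    (Finset.measurable_sum univ fun i _ => measurable_pi_apply i)
  convert this using 1 <;> funext ω
  · rw [Finset.sum_Ico_eq_sum_range, add_tsub_cancel_left]
    exact (Fin.sum_univ_eq_sum_range (fun i => τ (j + i) ω) m).symm
  · exact (Fin.sum_univ_eq_sum_range (fun i => τ i ω) m).symm

end IID

section Walk

variable {Ω : Type*}

def walk (τ : ℕ → Ω → ℤ) (k : ℕ) (ω : Ω) : ℤ := ∑ i ∈ range k, τ i ω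

lemma walk_add (τ : ℕ → Ω → ℤ) (j m : ℕ) (ω : Ω) :
    walk τ (j + m) ω = walk τ j ω + ∑ i ∈ Ico j (j + m), τ i ω := by
  simp only [walk, range_eq_Ico, sum_Ico_consecutive _ (Nat.zero_le j) (Nat.le_add_right j m)]

variable [MeasurableSpace Ω] {P : Measure Ω} [IsProbabilityMeasure P] {τ : ℕ → Ω → ℤ}

lemma measurable_walk (hmeas : ∀ n, Measurable (τ n)) (k : ℕ) : Measurable (walk τ k) :=
  Finset.measurable_sum _ fun i _ => hmeas i

lemma integral_ite_hitTime_eq_mul (hmeas : ∀ n, Measurable (τ n)) (hindep : iIndepFun τ P)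
    (hident : ∀ n, IdentDistrib (τ n) (τ 0) P P) (f : ℤ → ℝ) (x : ℤ) {j k : ℕ} (hjk : j ≤ k) :
    ∫ ω, (if hitTime (walk τ) x ω = j then f (x + walk τ k ω) else 0) ∂P =
      P.real {ω | hitTime (walk τ) x ω = j} * ∫ ω, f (walk τ (k - j) ω) ∂P := by
  obtain ⟨m, rfl⟩ := Nat.exists_eq_add_of_le hjk
  set A := {ω | hitTime (walk τ) x ω = j}
  set Y := fun ω => f (∑ i ∈ Ico j (j + m), τ i ω)
  have hA : MeasurableSet A :=
    measurable_hitTime (measurable_walk hmeas) (measurableSet_singleton _)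
  have hY : Measurable Y :=
    (measurable_of_countable f).comp (Finset.measurable_sum _ fun i _ => hmeas i)
  have hsplit : ∀ ω, (if hitTime (walk τ) x ω = j then f (x + walk τ (j + m) ω) else 0) =
      A.indicator 1 ω * Y ω := by
    intro ω
    by_cases h : hitTime (walk τ) x ω = j
    · have h0 := (hitTime_eq_coe_iff.1 h).1
      simp [A, Y, h, walk_add, ← add_assoc, h0]
    · simp [A, h]
  have hAY : IndepFun (A.indicator (1 : Ω → ℝ)) Y P := by
    refine (hindep.indepFun_finset (range j) (Ico j (j + m)) ?_ hmeas).of_factorsThrough ?_ ?_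
    · exact range_eq_Ico j ▸ Ico_disjoint_Ico_consecutive 0 j (j + m)
    · intro ω ω' h
      have hmem : ω ∈ A ↔ ω' ∈ A := hitTime_eq_coe_iff_of_eqOn fun i hi =>
        sum_congr rfl fun l hl => congrFun h ⟨l, mem_range.2 ((mem_range.1 hl).trans_le hi)⟩
      simp only [Set.indicator, hmem, Pi.one_apply]
    · intro ω ω' h
      exact congrArg f (sum_congr rfl fun i hi => congrFun h ⟨i, hi⟩)
  calc _ = ∫ ω, A.indicator 1 ω * Y ω ∂P := integral_congr_ae (ae_of_all _ hsplit)
    _ = (∫ ω, A.indicator 1 ω ∂P) * ∫ ω, Y ω ∂P :=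
      hAY.integral_fun_mul_eq_mul_integral
        ((measurable_const.indicator hA).aestronglyMeasurable) hY.aestronglyMeasurable
    _ = _ := by
      rw [integral_indicator_one hA, add_tsub_cancel_left]
      exact congrArg _ ((hindep.identDistrib_sum_Ico hmeas hident j m).comp
        (measurable_of_countable f)).integral_eq

lemma integral_walk_eq_renewal (hmeas : ∀ n, Measurable (τ n)) (hindep : iIndepFun τ P)
    (hident : ∀ n, IdentDistrib (τ n) (τ 0) P P) {f : ℤ → ℝ} {M : ℝ} (hM : ∀ y, |f y| ≤ M)
    (x : ℤ) (k : ℕ) :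
    ∫ ω, f (x + walk τ k ω) ∂P =
      ∫ ω, (if (k : ℕ∞) < hitTime (walk τ) x ω then f (x + walk τ k ω) else 0) ∂P +
        ∑ j ∈ range (k + 1),
          P.real {ω | hitTime (walk τ) x ω = j} * ∫ ω, f (walk τ (k - j) ω) ∂P := by
  have hσ := measurable_hitTime (x := x) (measurable_walk hmeas)
  have hF : Measurable fun ω => f (x + walk τ k ω) :=
    (measurable_of_countable f).comp ((measurable_walk hmeas k).const_add x)
  have hint : ∀ (p : ℕ∞ → Prop) [DecidablePred p],
      Integrable (fun ω => if p (hitTime (walk τ) x ω) then f (x + walk τ k ω) else 0) P :=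
    fun p _ => .of_bound
      (hF.ite (hσ (.of_discrete (s := {n | p n}))) measurable_const).aestronglyMeasurable M
      (ae_of_all _ fun ω => by split_ifs <;> simp [hM, (abs_nonneg _).trans (hM 0)])
  calc ∫ ω, f (x + walk τ k ω) ∂P
      = ∫ ω, ((if (k : ℕ∞) < hitTime (walk τ) x ω then f (x + walk τ k ω) else 0) +
          ∑ j ∈ range (k + 1),
            if hitTime (walk τ) x ω = j then f (x + walk τ k ω) else 0) ∂P := by
        simp only [ENat.ite_lt_add_sum_ite_eq]
    _ = _ := by
      rw [integral_add (hint ((k : ℕ∞) < ·))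
          (integrable_finsetSum _ fun (j : ℕ) _ => hint (· = j)),
        integral_finsetSum _ fun (j : ℕ) _ => hint (· = j)]
      exact congrArg _ (sum_congr rfl fun j hj =>
        integral_ite_hitTime_eq_mul hmeas hindep hident f x (mem_range_succ_iff.1 hj))

end Walk

/-- With `(τ n)` i.i.d. integer-valued, `S` the associated random walk and
`σ_x` the first hitting time of `0` by the walk started at `x`, for every bounded
`f : ℤ → ℝ`, every `x ∈ ℤ` and every `|s| < 1`,
`∑_{k ≥ 0} s^k E[f(x + S k)] = E[∑_{k=0}^{σ_x - 1} s^k f(x + S k)]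
  + E[s^{σ_x} 1_{σ_x < ∞}] ∑_{k ≥ 0} s^k E[f(S k)]`,
where on `{σ_x = ∞}` the inner sum runs over all `k ∈ ℕ`. -/
theorem statement4
    {Ω : Type*} [MeasurableSpace Ω] (P : Measure Ω) [IsProbabilityMeasure P]
    (τ : ℕ → Ω → ℤ) (hmeas : ∀ n, Measurable (τ n))
    (hindep : iIndepFun τ P)
    (hident : ∀ n, IdentDistrib (τ n) (τ 0) P P)
    (S : ℕ → Ω → ℤ) (hS : ∀ k ω, S k ω = ∑ i ∈ Finset.range k, τ i ω)
    (f : ℤ → ℝ) (hf : ∃ M, ∀ y, |f y| ≤ M)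
    (x : ℤ) (s : ℝ) (hs : |s| < 1) :
    (∑' k : ℕ, s ^ k * ∫ ω, f (x + S k ω) ∂P) =
      (∫ ω, (∑' k : ℕ,
          if (k : ℕ∞) < hitTime S x ω then s ^ k * f (x + S k ω) else 0) ∂P) +
        (∫ ω, (if hitTime S x ω = ⊤ then (0 : ℝ) else s ^ (hitTime S x ω).toNat) ∂P) *
          ∑' k : ℕ, s ^ k * ∫ ω, f (S k ω) ∂P := by
  obtain ⟨M, hM⟩ := hf
  obtain rfl : S = walk τ := funext fun k => funext (hS k)
  have hσ := measurable_hitTime (x := x) (measurable_walk hmeas)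
  have hF : ∀ k, Measurable fun ω => f (x + walk τ k ω) := fun k =>
    (measurable_of_countable f).comp ((measurable_walk hmeas k).const_add x)
  rw [integral_tsum_ite_lt hσ hs hF fun k ω => hM _, integral_ite_eq_top_pow hσ hs,
    tsum_congr fun k => congrArg _ (integral_walk_eq_renewal hmeas hindep hident hM x k)]
  refine tsum_pow_mul_add_sum_range_mul (b := fun k => ∫ ω, f (walk τ k ω) ∂P)
    (C := M) (A := 1) (B := M) hs (fun k => ?_) (fun j => ?_) (fun k => ?_)
  · exact abs_integral_le_of_abs_le fun ω => by
      split_ifs <;> simp [hM, (abs_nonneg _).trans (hM 0)]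
  · rw [abs_of_nonneg measureReal_nonneg]
    exact measureReal_le_one
  · exact abs_integral_le_of_abs_le fun ω => hM _
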